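/- arXiv:2411.01064 — 4 statements merged into one kernel-verified Lean document; each statement's English description precedes it below -/
import Mathlib

section
/- Let Q : ℝ^d × ℝ → ℝ (arguments θ and income y) be differentiable with ∂Q/∂y(θ, y) > 0 for all (θ, y); let q : ℝ × ℝ^d → ℝ and let P : ℝ × ℝ^d → ℝ be differentiable in θ. Suppose Q satisfies, for every j = 1, …, d and all (θ, y), the partial differential equation ∂Q/∂θ_j(θ, y) + ∂P/∂θ_j(q(y, θ), θ) · ∂Q/∂y(θ, y) = 0. Let e : ℝ^d × ℝ → ℝ be differentiable in θ and satisfy Q(θ, e(θ, u)) = u for all θ. Then for each j: ∂e/∂θ_j(θ, u) = ∂P/∂θ_j(q(e(θ, u), θ), θ). -/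
/-!
Differentiating the identity `Q (θ, e (θ, u)) = u` in `θ_j` gives
`∂_j Q + ∂_j e · ∂_y Q = 0`. The PDE says the same with `∂_j P` in place of `∂_j e`,
so the two agree after cancelling `∂_y Q > 0`.
-/

open Filter Topology

theorem fderiv_add_mul_fderiv_eq_zero_of_eventually_eq_const
    {𝕜 E : Type*} [NontriviallyNormedField 𝕜] [NormedAddCommGroup E] [NormedSpace 𝕜 E]
    {f : E × 𝕜 → 𝕜} {g : E → 𝕜} {x : E} {c : 𝕜}
    (hf : DifferentiableAt 𝕜 f (x, g x)) (hg : DifferentiableAt 𝕜 g x)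
    (hfg : ∀ᶠ x' in 𝓝 x, f (x', g x') = c) (v : E) :
    fderiv 𝕜 f (x, g x) (v, 0) + fderiv 𝕜 g x v * fderiv 𝕜 f (x, g x) (0, 1) = 0 := by
  have hchain := hf.hasFDerivAt.comp x ((hasFDerivAt_id x).prodMk hg.hasFDerivAt)
  have hconst : HasFDerivAt (fun x' => f (x', g x')) (0 : E →L[𝕜] 𝕜) x :=
    (hasFDerivAt_const c x).congr_of_eventuallyEq hfg
  have hzero : fderiv 𝕜 f (x, g x) (v, fderiv 𝕜 g x v) = 0 :=
    congrArg (· v) (hchain.unique hconst)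
  have hsplit : ((v, fderiv 𝕜 g x v) : E × 𝕜) = (v, 0) + fderiv 𝕜 g x v • (0, 1) := by
    simp
  rwa [hsplit, map_add, map_smul, smul_eq_mul] at hzero

theorem stmt_7_general {d : ℕ} (Q : (Fin d → ℝ) × ℝ → ℝ) (hQ : Differentiable ℝ Q)
    (hQy : ∀ (θ : Fin d → ℝ) (y : ℝ), 0 < fderiv ℝ Q (θ, y) (0, 1))
    (q : ℝ × (Fin d → ℝ) → ℝ) (P : ℝ × (Fin d → ℝ) → ℝ)
    (hPDE : ∀ (j : Fin d) (θ : Fin d → ℝ) (y : ℝ),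
      fderiv ℝ Q (θ, y) (Pi.single j 1, 0)
        + fderiv ℝ (fun θ' => P (q (y, θ), θ')) θ (Pi.single j 1)
            * fderiv ℝ Q (θ, y) (0, 1) = 0)
    (e : (Fin d → ℝ) × ℝ → ℝ)
    (he : ∀ u : ℝ, Differentiable ℝ (fun θ => e (θ, u)))
    (heQ : ∀ (θ : Fin d → ℝ) (u : ℝ), Q (θ, e (θ, u)) = u) :
    ∀ (j : Fin d) (θ : Fin d → ℝ) (u : ℝ),
      fderiv ℝ (fun θ' => e (θ', u)) θ (Pi.single j 1)
        = fderiv ℝ (fun θ' => P (q (e (θ, u), θ), θ')) θ (Pi.single j 1) := by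
  intro j θ u
  have himplicit := fderiv_add_mul_fderiv_eq_zero_of_eventually_eq_const
    (g := fun θ' => e (θ', u)) (hQ _) (he u θ) (Eventually.of_forall (heQ · u)) (Pi.single j 1)
  have hroy := hPDE j θ (e (θ, u))
  refine mul_right_cancel₀ (hQy θ (e (θ, u))).ne' ?_
  linear_combination himplicit - hroy

/-- Nonlinear-budget Shephard's lemma: if the quantile indirect utility `Q`
satisfies the Roy-identity PDE system and the expenditure function `e`
inverts `Q` in income, then `∂e/∂θ_j = ∂P/∂θ_j` evaluated at the
demanded quantity. -/
theorem stmt_7 {d : ℕ} (Q : (Fin d → ℝ) × ℝ → ℝ) (hQ : Differentiable ℝ Q)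
    (hQy : ∀ (θ : Fin d → ℝ) (y : ℝ), 0 < fderiv ℝ Q (θ, y) (0, 1))
    (q : ℝ × (Fin d → ℝ) → ℝ) (P : ℝ × (Fin d → ℝ) → ℝ)
    (hP : ∀ s : ℝ, Differentiable ℝ (fun θ => P (s, θ)))
    (hPDE : ∀ (j : Fin d) (θ : Fin d → ℝ) (y : ℝ),
      fderiv ℝ Q (θ, y) (Pi.single j 1, 0)
        + fderiv ℝ (fun θ' => P (q (y, θ), θ')) θ (Pi.single j 1)
            * fderiv ℝ Q (θ, y) (0, 1) = 0)
    (e : (Fin d → ℝ) × ℝ → ℝ)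
    (he : ∀ u : ℝ, Differentiable ℝ (fun θ => e (θ, u)))
    (heQ : ∀ (θ : Fin d → ℝ) (u : ℝ), Q (θ, e (θ, u)) = u) :
    ∀ (j : Fin d) (θ : Fin d → ℝ) (u : ℝ),
      fderiv ℝ (fun θ' => e (θ', u)) θ (Pi.single j 1)
        = fderiv ℝ (fun θ' => P (q (e (θ, u), θ), θ')) θ (Pi.single j 1) :=
  stmt_7_general Q hQ hQy q P hPDE e he heQ
end

section
/- (Slutsky symmetry for nonlinear budget sets.) Let P : ℝ × ℝ^d → ℝ (arguments: attribute level q and parameter θ), with d ≥ 2, be twice continuously differentiable; let q : ℝ × ℝ^d → ℝ (arguments: income y and θ) be continuously differentiable; and let e : ℝ^d × ℝ → ℝ be twice continuously differentiable in θ and satisfy, for all j = 1, …, d and all (θ, u): ∂e/∂θ_j(θ, u) = ∂P/∂θ_j(q(e(θ, u), θ), θ). Then for all j, k ∈ {1, …, d}, at every point y = e(θ, u): ∂²P/∂θ_j∂q(q(y,θ), θ) · [ ∂q/∂y(y,θ) · ∂P/∂θ_k(q(y,θ), θ) + ∂q/∂θ_k(y,θ) ] = ∂²P/∂θ_k∂q(q(y,θ),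 θ) · [ ∂q/∂y(y,θ) · ∂P/∂θ_j(q(y,θ), θ) + ∂q/∂θ_j(y,θ) ]. -/
/-! Differentiating the Shephard relation `∂_θ e(θ,u) = ∂_θ P(q(e(θ,u),θ),θ)` once more in `θ`
gives, by the chain rule, `∂²e/∂θ_k∂θ_j = P_{qθ_j} (q_y P_{θ_k} + q_{θ_k}) + P_{θ_kθ_j}`.
The Hessians of `e` and of `P` are symmetric, so exchanging `j` and `k` leaves exactly the
claimed identity. -/

open Filter Topology ContinuousLinearMap

section

variable {𝕜 : Type*} [NontriviallyNormedField 𝕜]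
  {E F G H : Type*} [NormedAddCommGroup E] [NormedSpace 𝕜 E] [NormedAddCommGroup F]
  [NormedSpace 𝕜 F] [NormedAddCommGroup G] [NormedSpace 𝕜 G] [NormedAddCommGroup H]
  [NormedSpace 𝕜 H]

theorem fderiv_fderiv_apply_of_fderiv_eventuallyEq_comp {f : E → G} {h : F → G} {g : E → F}
    {T : E →L[𝕜] F} {x : E} (hh : DifferentiableAt 𝕜 (fderiv 𝕜 h) (g x))
    (hg : DifferentiableAt 𝕜 g x)
    (hf : fderiv 𝕜 f =ᶠ[𝓝 x] fun x' => (fderiv 𝕜 h (g x')).comp T) (a b : E) :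
    fderiv 𝕜 (fderiv 𝕜 f) x a b = fderiv 𝕜 (fderiv 𝕜 h) (g x) (fderiv 𝕜 g x a) (T b) := by
  have hcomp := ((compL 𝕜 E F G).flip T).hasFDerivAt.comp x (hh.hasFDerivAt.comp x hg.hasFDerivAt)
  rw [(hcomp.congr_of_eventuallyEq hf).fderiv]
  rfl

theorem fderiv_fderiv_apply_comm_of_fderiv_eventuallyEq_comp {f : E → G} {h : F → G}
    {g : E → F} {T : E →L[𝕜] F} {x : E} (hh : DifferentiableAt 𝕜 (fderiv 𝕜 h) (g x))
    (hg : DifferentiableAt 𝕜 g x)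
    (hf : fderiv 𝕜 f =ᶠ[𝓝 x] fun x' => (fderiv 𝕜 h (g x')).comp T)
    (hsymm : IsSymmSndFDerivAt 𝕜 f x) (a b : E) :
    fderiv 𝕜 (fderiv 𝕜 h) (g x) (fderiv 𝕜 g x a) (T b)
      = fderiv 𝕜 (fderiv 𝕜 h) (g x) (fderiv 𝕜 g x b) (T a) := by
  rw [← fderiv_fderiv_apply_of_fderiv_eventuallyEq_comp hh hg hf,
    ← fderiv_fderiv_apply_of_fderiv_eventuallyEq_comp hh hg hf]
  exact hsymm a b

theorem hasFDerivAt_prodMk_comp_prodMk_self {f : E → F} {q : F × E → H} {x : E}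
    (hq : DifferentiableAt 𝕜 q (f x, x)) (hf : DifferentiableAt 𝕜 f x) :
    HasFDerivAt (fun x' => (q (f x', x'), x'))
      (((fderiv 𝕜 q (f x, x)).comp ((fderiv 𝕜 f x).prod (.id 𝕜 E))).prod (.id 𝕜 E)) x :=
  (hq.hasFDerivAt.comp (f := fun x' => (f x', x')) x
    (hf.hasFDerivAt.prodMk (hasFDerivAt_id x))).prodMk (hasFDerivAt_id x)

theorem ContinuousLinearMap.apply_prod_eq_smul_add (L : 𝕜 × E →L[𝕜] G) (c : 𝕜) (a : E) :
    L (c, a) = c • L (1, 0) + L (0, a) := by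
  rw [← map_smul, ← map_add]
  simp

theorem deriv_fderiv_apply_fst {P : 𝕜 × E → G} {s : 𝕜} {θ : E}
    (hP : DifferentiableAt 𝕜 (fderiv 𝕜 P) (s, θ)) (v : 𝕜 × E) :
    deriv (fun s' => fderiv 𝕜 P (s', θ) v) s = fderiv 𝕜 (fderiv 𝕜 P) (s, θ) (1, 0) v := by
  have hcomp := (apply 𝕜 G v).hasFDerivAt.comp_hasDerivAt s
    (hP.hasFDerivAt.comp_hasDerivAt s ((hasDerivAt_id s).prodMk (hasDerivAt_const s θ)))
  exact hcomp.deriv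

end

theorem stmt_8_general {d : ℕ}
    (P : ℝ × (Fin d → ℝ) → ℝ) (hP : ContDiff ℝ 2 P)
    (q : ℝ × (Fin d → ℝ) → ℝ) (hq : ContDiff ℝ 1 q)
    (e : (Fin d → ℝ) × ℝ → ℝ)
    (he : ∀ u : ℝ, ContDiff ℝ 2 (fun θ => e (θ, u)))
    (hShep : ∀ (j : Fin d) (θ : Fin d → ℝ) (u : ℝ),
      fderiv ℝ (fun θ' => e (θ', u)) θ (Pi.single j 1)
        = fderiv ℝ P (q (e (θ, u), θ), θ) (0, Pi.single j 1)) :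
    ∀ (j k : Fin d) (θ : Fin d → ℝ) (u y : ℝ), y = e (θ, u) →
      deriv (fun s => fderiv ℝ P (s, θ) (0, Pi.single j 1)) (q (y, θ))
          * (fderiv ℝ q (y, θ) (1, 0)
                * fderiv ℝ P (q (y, θ), θ) (0, Pi.single k 1)
              + fderiv ℝ q (y, θ) (0, Pi.single k 1))
        = deriv (fun s => fderiv ℝ P (s, θ) (0, Pi.single k 1)) (q (y, θ))
          * (fderiv ℝ q (y, θ) (1, 0)
                * fderiv ℝ P (q (y, θ), θ) (0, Pi.single j 1)
              + fderiv ℝ q (y, θ) (0, Pi.single j 1)) := by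
  intro j k θ u y rfl
  have hP' : Differentiable ℝ (fderiv ℝ P) := (hP.fderiv_right le_rfl).differentiable one_ne_zero
  have hShep_clm : ∀ θ', fderiv ℝ (fun t => e (t, u)) θ'
      = (fderiv ℝ P (q (e (θ', u), θ'), θ')).comp (inr ℝ ℝ (Fin d → ℝ)) := fun θ' =>
    coe_injective <| (Pi.basisFun ℝ (Fin d)).ext fun i => by simpa using hShep i θ' u
  have hgraph := hasFDerivAt_prodMk_comp_prodMk_self (hq.differentiable one_ne_zero _)
    ((he u).differentiable two_ne_zero θ)
  have hcomm := fderiv_fderiv_apply_comm_of_fderiv_eventuallyEq_comp (hP' _)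
    hgraph.differentiableAt (.of_forall hShep_clm)
    ((he u).contDiffAt.isSymmSndFDerivAt (by simp)) (Pi.single k 1) (Pi.single j 1)
  have hsymmP := hP.contDiffAt.isSymmSndFDerivAt (x := (q (e (θ, u), θ), θ)) (by simp)
    (0, Pi.single k 1) (0, Pi.single j 1)
  rw [deriv_fderiv_apply_fst (hP' _), deriv_fderiv_apply_fst (hP' _)]
  rw [hgraph.fderiv] at hcomm
  simp only [comp_apply, prod_apply, coe_id', id_eq, inr_apply, hShep] at hcomm
  set B := fderiv ℝ (fderiv ℝ P) (q (e (θ, u), θ), θ)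
  set m := fderiv ℝ q (e (θ, u), θ)
  set p := fun i : Fin d => fderiv ℝ P (q (e (θ, u), θ), θ) (0, Pi.single i 1)
  rw [apply_prod_eq_smul_add B (m (p k, _)), apply_prod_eq_smul_add B (m (p j, _)),
    apply_prod_eq_smul_add m (p k), apply_prod_eq_smul_add m (p j)] at hcomm
  simp only [add_apply, smul_apply, smul_eq_mul] at hcomm
  linear_combination hcomm - hsymmP

/-- Slutsky symmetry for nonlinear budget sets: if the expenditure function
satisfies the nonlinear-budget Shephard relations
`∂e/∂θ_j(θ,u) = ∂P/∂θ_j(q(e(θ,u),θ),θ)`, then at every point `y = e(θ,u)`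
the quantile demand satisfies the symmetry condition
`∂²P/∂θ_j∂q · (∂q/∂y · ∂P/∂θ_k + ∂q/∂θ_k) = ∂²P/∂θ_k∂q · (∂q/∂y · ∂P/∂θ_j + ∂q/∂θ_j)`. -/
theorem stmt_8 {d : ℕ} (hd : 2 ≤ d)
    (P : ℝ × (Fin d → ℝ) → ℝ) (hP : ContDiff ℝ 2 P)
    (q : ℝ × (Fin d → ℝ) → ℝ) (hq : ContDiff ℝ 1 q)
    (e : (Fin d → ℝ) × ℝ → ℝ)
    (he : ∀ u : ℝ, ContDiff ℝ 2 (fun θ => e (θ, u)))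
    (hShep : ∀ (j : Fin d) (θ : Fin d → ℝ) (u : ℝ),
      fderiv ℝ (fun θ' => e (θ', u)) θ (Pi.single j 1)
        = fderiv ℝ P (q (e (θ, u), θ), θ) (0, Pi.single j 1)) :
    ∀ (j k : Fin d) (θ : Fin d → ℝ) (u y : ℝ), y = e (θ, u) →
      deriv (fun s => fderiv ℝ P (s, θ) (0, Pi.single j 1)) (q (y, θ))
          * (fderiv ℝ q (y, θ) (1, 0)
                * fderiv ℝ P (q (y, θ), θ) (0, Pi.single k 1)
              + fderiv ℝ q (y, θ) (0, Pi.single k 1))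
        = deriv (fun s => fderiv ℝ P (s, θ) (0, Pi.single k 1)) (q (y, θ))
          * (fderiv ℝ q (y, θ) (1, 0)
                * fderiv ℝ P (q (y, θ), θ) (0, Pi.single j 1)
              + fderiv ℝ q (y, θ) (0, Pi.single j 1)) :=
  stmt_8_general P hP q hq e he hShep
end

section
/- Suppose e : ℝ² × ℝ → ℝ, written e(θ₁, θ₂, u), is twice continuously differentiable in (θ₁, θ₂) on a nonempty open set, and there exist constants r₀, r₁, r₂, r₃ ∈ ℝ such that for all (θ₁, θ₂) in that set: ∂e/∂θ₁(θ₁, θ₂, u) = 1 and ∂e/∂θ₂(θ₁, θ₂, u) = r₀ + r₁ · e(θ₁, θ₂, u) + r₂ θ₁ + r₃ θ₂. Then r₁ + r₂ = 0. -/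
/-!
Since `∂e/∂θ₁ = 1`, the function `e(θ₁, θ₂) - θ₁` does not depend on `θ₁` on a box inside `s`,
so neither does `∂e/∂θ₂`. Moving `θ₁` by `δ` changes `e` by `δ`, hence changes the right-hand side
`r₀ + r₁ e + r₂ θ₁ + r₃ θ₂` by `(r₁ + r₂) δ`, which must therefore vanish.
-/

open Metric Topology

theorem Convex.sub_eq_sub_of_hasDerivAt_eq_one {s : Set ℝ} {g : ℝ → ℝ} (hs : Convex ℝ s)
    (hg : ∀ x ∈ s, HasDerivAt g 1 x) {x y : ℝ} (hx : x ∈ s) (hy : y ∈ s) :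
    g y - g x = y - x := by
  have hderiv : ∀ z ∈ s, HasDerivWithinAt (g - id) 0 s z := fun z hz => by
    rw [← sub_self 1]
    exact ((hg z hz).sub (hasDerivAt_id z)).hasDerivWithinAt
  have := hs.norm_image_sub_le_of_norm_hasDerivWithin_le hderiv (fun _ _ => norm_zero.le) hx hy
  rw [zero_mul, norm_le_zero_iff, Pi.sub_apply, Pi.sub_apply, id, id] at this
  linarith

theorem Convex.hasDerivAt_snd_of_hasDerivAt_fst_eq_one {U V : Set ℝ} {f : ℝ → ℝ → ℝ}
    {a b t d : ℝ} (hU : Convex ℝ U) (hV : V ∈ 𝓝 t)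
    (h1 : ∀ x ∈ U, ∀ y ∈ V, HasDerivAt (f · y) 1 x) (ha : a ∈ U) (hb : b ∈ U)
    (hd : HasDerivAt (f a ·) d t) :
    HasDerivAt (f b ·) d t := by
  have hshift : (f b ·) =ᶠ[𝓝 t] (f a · + (b - a)) := by
    filter_upwards [hV] with y hy
    linarith [hU.sub_eq_sub_of_hasDerivAt_eq_one (fun x hx => h1 x hx y hy) ha hb]
  exact (hd.add_const (b - a)).congr_of_eventuallyEq hshift

theorem stmt_9_general (e : ℝ → ℝ → ℝ → ℝ) (u : ℝ)
    (s : Set (ℝ × ℝ)) (hs : IsOpen s) (hne : s.Nonempty)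
    (r₀ r₁ r₂ r₃ : ℝ)
    (h1 : ∀ p ∈ s, HasDerivAt (fun θ₁ => e θ₁ p.2 u) 1 p.1)
    (h2 : ∀ p ∈ s, HasDerivAt (fun θ₂ => e p.1 θ₂ u)
      (r₀ + r₁ * e p.1 p.2 u + r₂ * p.1 + r₃ * p.2) p.2) :
    r₁ + r₂ = 0 := by
  obtain ⟨⟨a, t⟩, hat⟩ := hne
  obtain ⟨ε, hε, hball⟩ := isOpen_iff.mp hs (a, t) hat
  have hbox : ∀ x ∈ ball a ε, ∀ y ∈ ball t ε, (x, y) ∈ s := fun x hx y hy =>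
    hball (ball_prod_same a t ε ▸ Set.mk_mem_prod hx hy)
  have h1' : ∀ x ∈ ball a ε, ∀ y ∈ ball t ε, HasDerivAt (e · y u) 1 x := fun x hx y hy =>
    h1 (x, y) (hbox x hx y hy)
  set b := a + ε / 2
  have ha : a ∈ ball a ε := mem_ball_self hε
  have hb : b ∈ ball a ε := by
    rw [mem_ball, Real.dist_eq, add_sub_cancel_left, abs_of_pos (half_pos hε)]
    exact half_lt_self hε
  have hderiv_eq := (h2 (b, t) (hbox b hb t (mem_ball_self hε))).unique <|
    (convex_ball a ε).hasDerivAt_snd_of_hasDerivAt_fst_eq_one (ball_mem_nhds t hε) h1' ha hb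
      (h2 (a, t) hat)
  have hdiff := (convex_ball a ε).sub_eq_sub_of_hasDerivAt_eq_one
    (fun x hx => h1' x hx t (mem_ball_self hε)) ha hb
  have hvanish : (r₁ + r₂) * (ε / 2) = 0 := by
    simp only [b] at hderiv_eq hdiff
    linear_combination hderiv_eq - r₁ * hdiff
  exact (mul_eq_zero.mp hvanish).resolve_right (half_pos hε).ne'

/-- Internal consistency of the log-linear demand specification (Proposition 2):
if on a nonempty open set `∂e/∂θ₁ = 1` and
`∂e/∂θ₂ = r₀ + r₁ e + r₂ θ₁ + r₃ θ₂` for a twice continuously differentiable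
expenditure function `e`, then `r₁ + r₂ = 0`. -/
theorem stmt_9 (e : ℝ → ℝ → ℝ → ℝ) (u : ℝ)
    (s : Set (ℝ × ℝ)) (hs : IsOpen s) (hne : s.Nonempty)
    (he : ContDiffOn ℝ 2 (fun p : ℝ × ℝ => e p.1 p.2 u) s)
    (r₀ r₁ r₂ r₃ : ℝ)
    (h1 : ∀ p ∈ s, HasDerivAt (fun θ₁ => e θ₁ p.2 u) 1 p.1)
    (h2 : ∀ p ∈ s, HasDerivAt (fun θ₂ => e p.1 θ₂ u)
      (r₀ + r₁ * e p.1 p.2 u + r₂ * p.1 + r₃ * p.2) p.2) :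
    r₁ + r₂ = 0 :=
  stmt_9_general e u s hs hne r₀ r₁ r₂ r₃ h1 h2
end

section
/- (Closed-form compensating variation and path independence for the log specification.) Let r₀, r₁, r₃ ∈ ℝ with r₁ ≠ 0, and fix y ∈ ℝ. Let θ₁, θ₂ : [0,1] → ℝ be differentiable with θ₁(0) = a₁, θ₂(0) = a₂, θ₁(1) = b₁, θ₂(1) = b₂. Suppose C : [0,1] → ℝ is differentiable, C(0) = 0, and for all t ∈ [0,1]: C′(t) = θ₁′(t) + θ₂′(t) · ( r₀ + r₁ (y + C(t)) − r₁ θ₁(t) + r₃ θ₂(t) ). Then C(1) = e^{r₁ (b₂ − a₂)} · ( r₀/r₁ + y + a₂ r₃/r₁ + r₃/r₁² − a₁ ) + b₁ − r₀/r₁ − y − r₃ b₂/r₁ − r₃/r₁². In particular C(1) depends only on the endpoint values (a₁, a₂) and (b₁, b₂), not on the path (θ₁(t), θ₂(t)). -/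
/-!
Shifting `C` by the affine function `-θ₁ + (r₃/r₁) θ₂ + r₀/r₁ + y + r₃/r₁²` of the price
parameters turns the ODE into the linear equation `u' = r₁ θ₂' u`, whose solution is
`u(t) = exp (r₁ (θ₂ t - θ₂ 0)) u(0)` by the integrating factor `exp (-r₁ θ₂)`. Hence `C 1`
depends on the path only through its endpoints.
-/

open Real Set

theorem eq_exp_sub_mul_of_hasDerivAt_eq_mul {u g g' : ℝ → ℝ} {a b : ℝ} (hab : a ≤ b)
    (hg : ∀ t ∈ Icc a b, HasDerivAt g (g' t) t)
    (hu : ∀ t ∈ Icc a b, HasDerivAt u (g' t * u t) t) :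
    u b = exp (g b - g a) * u a := by
  set F : ℝ → ℝ := fun t => exp (-g t) * u t
  have hF : ∀ t ∈ Icc a b, HasDerivAt F 0 t := fun t ht => by
    refine (((hg t ht).neg.exp).mul (hu t ht)).congr_deriv ?_
    ring
  have hFb : F b = F a :=
    constant_of_has_deriv_right_zero (fun t ht => (hF t ht).continuousAt.continuousWithinAt)
      (fun t ht => (hF t (Ico_subset_Icc_self ht)).hasDerivWithinAt) b (right_mem_Icc.2 hab)
  calc u b = exp (g b) * F b := by
        simp only [F, ← mul_assoc, ← exp_add, add_neg_cancel, exp_zero, one_mul]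
    _ = exp (g b - g a) * u a := by rw [hFb, sub_eq_add_neg, exp_add]; ring

/-- Closed-form compensating variation and path independence for the
log specification (Proposition 3): if `C` solves the ODE
`C′(t) = θ₁′(t) + θ₂′(t)(r₀ + r₁(y + C(t)) − r₁θ₁(t) + r₃θ₂(t))` with `C(0)=0`
along any differentiable path with `θ(0) = (a₁,a₂)`, `θ(1) = (b₁,b₂)`, then
`C(1)` is given by the stated closed form depending only on the endpoints. -/
theorem stmt_11 (r₀ r₁ r₃ y a₁ a₂ b₁ b₂ : ℝ) (hr₁ : r₁ ≠ 0)
    (θ₁ θ₂ θ₁' θ₂' : ℝ → ℝ)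
    (hθ₁ : ∀ t ∈ Set.Icc (0 : ℝ) 1, HasDerivAt θ₁ (θ₁' t) t)
    (hθ₂ : ∀ t ∈ Set.Icc (0 : ℝ) 1, HasDerivAt θ₂ (θ₂' t) t)
    (h0a : θ₁ 0 = a₁) (h0b : θ₂ 0 = a₂) (h1a : θ₁ 1 = b₁) (h1b : θ₂ 1 = b₂)
    (C : ℝ → ℝ) (hC0 : C 0 = 0)
    (hC : ∀ t ∈ Set.Icc (0 : ℝ) 1,
      HasDerivAt C
        (θ₁' t + θ₂' t * (r₀ + r₁ * (y + C t) - r₁ * θ₁ t + r₃ * θ₂ t)) t) :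
    C 1 = Real.exp (r₁ * (b₂ - a₂))
        * (r₀ / r₁ + y + a₂ * r₃ / r₁ + r₃ / r₁ ^ 2 - a₁)
      + b₁ - r₀ / r₁ - y - r₃ * b₂ / r₁ - r₃ / r₁ ^ 2 := by
  set u : ℝ → ℝ := fun t => C t - θ₁ t + r₃ * θ₂ t / r₁ + r₀ / r₁ + y + r₃ / r₁ ^ 2
  have hu : ∀ t ∈ Icc (0 : ℝ) 1, HasDerivAt u (r₁ * θ₂' t * u t) t := fun t ht => by
    refine (((hC t ht).sub (hθ₁ t ht)).add (((hθ₂ t ht).const_mul r₃).div_const r₁)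
      |>.add_const _ |>.add_const _ |>.add_const _).congr_deriv ?_
    simp only [u]
    field_simp
    ring
  have hsol := eq_exp_sub_mul_of_hasDerivAt_eq_mul zero_le_one
    (fun t ht => (hθ₂ t ht).const_mul r₁) hu
  simp only [u, h0a, h0b, h1a, h1b, hC0, ← mul_sub] at hsol
  linear_combination hsol
end
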